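/- arXiv:1912.13416 — 6 statements merged into one kernel-verified Lean document; each statement's English description precedes it below -/
import Mathlib

section
/- Total reaction-rate integral from complete consumption of the reactant: let ν < 0, M > 0 and ṁ > 0. Suppose Y : [0,∞) → ℝ is C¹, p : [0,∞) → ℝ is continuous and positive with p·Y′ differentiable on (0,∞), ω : [0,∞) → ℝ is integrable, the species transport equation ṁ·Y′(x) − (p·Y′)′(x) = ν·M·ω(x) holds for all x > 0, the interface species balance ṁ = ṁ·Y(0) − p(0)·Y′(0) holds, and lim_{x→∞} Y(x) = 0 and lim_{x→∞} p(x)·Y′(x) = 0. Then ∫₀^∞ ω(x) dx = −ṁ/(M·ν), a positive quantity. -/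
/-! The total flux `F = ṁ·Y − p·Y'` of the reactant satisfies `F' = ν·M·ω` by the transport
equation, vanishes at infinity and equals `ṁ` at the interface, so `ν·M·∫₀^∞ ω = 0 − F(0) = −ṁ`. -/

open Set Filter Topology MeasureTheory

theorem integral_Ioi_eq_neg_flux_of_balance {a c : ℝ} {Y Y' q s : ℝ → ℝ}
    (hY : ∀ x ∈ Ici a, HasDerivWithinAt Y (Y' x) (Ici a) x)
    (hq : ContinuousWithinAt q (Ici a) a)
    (hqdiff : ∀ x ∈ Ioi a, DifferentiableAt ℝ q x)
    (hbalance : ∀ x ∈ Ioi a, c * Y' x - deriv q x = s x)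
    (hs : IntegrableOn s (Ioi a))
    (hYlim : Tendsto Y atTop (𝓝 0)) (hqlim : Tendsto q atTop (𝓝 0)) :
    ∫ x in Ioi a, s x = -(c * Y a - q a) := by
  have hcont : ContinuousWithinAt (fun y => c * Y y - q y) (Ici a) a :=
    ((hY a self_mem_Ici).continuousWithinAt.const_mul c).sub hq
  have hderiv : ∀ x ∈ Ioi a, HasDerivAt (fun y => c * Y y - q y) (s x) x := fun x hx => by
    have hYx := (hY x (mem_Ici_of_Ioi hx)).hasDerivAt (Ici_mem_nhds hx)
    exact hbalance x hx ▸ (hYx.const_mul c).sub (hqdiff x hx).hasDerivAt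
  have hlim : Tendsto (fun y => c * Y y - q y) atTop (𝓝 0) := by
    simpa using (hYlim.const_mul c).sub hqlim
  simpa using integral_Ioi_of_hasDerivAt_of_tendsto hcont hderiv hs hlim

theorem reaction_rate_integral_general
    (ν M mdot : ℝ) (hν : ν < 0) (hM : 0 < M) (hmdot : 0 < mdot)
    (Y Y' p ω : ℝ → ℝ)
    (hY : ∀ x ∈ Set.Ici (0:ℝ), HasDerivWithinAt Y (Y' x) (Set.Ici 0) x)
    (hY'cont : ContinuousOn Y' (Set.Ici 0))
    (hpcont : ContinuousOn p (Set.Ici 0))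
    (hpYdiff : ∀ x ∈ Set.Ioi (0:ℝ), DifferentiableAt ℝ (fun y => p y * Y' y) x)
    (hωint : MeasureTheory.IntegrableOn ω (Set.Ioi 0))
    (htransport : ∀ x ∈ Set.Ioi (0:ℝ),
      mdot * Y' x - deriv (fun y => p y * Y' y) x = ν * M * ω x)
    (hinterface : mdot = mdot * Y 0 - p 0 * Y' 0)
    (hYlim : Filter.Tendsto Y Filter.atTop (nhds 0))
    (hpYlim : Filter.Tendsto (fun x => p x * Y' x) Filter.atTop (nhds 0)) :
    (∫ x in Set.Ioi (0:ℝ), ω x) = -mdot / (M * ν) ∧ 0 < -mdot / (M * ν) := by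
  have hMν : M * ν < 0 := mul_neg_of_pos_of_neg hM hν
  have hflux := integral_Ioi_eq_neg_flux_of_balance (q := fun y => p y * Y' y) hY
    ((hpcont.mul hY'cont).continuousWithinAt self_mem_Ici) hpYdiff htransport
    (hωint.const_mul (ν * M)) hYlim hpYlim
  rw [integral_const_mul] at hflux
  refine ⟨?_, div_pos_of_neg_of_neg (neg_neg_of_pos hmdot) hMν⟩
  rw [eq_div_iff hMν.ne]
  linear_combination hflux + hinterface

/-- Total reaction-rate integral from complete consumption of the reactant:
with `ν < 0` the stoichiometric coefficient, `M > 0` the molar mass and `ṁ > 0`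
the mass flow rate, if the mass fraction `Y` is C¹ on `[0,∞)` (with derivative `Y'`),
`p = ρ·D_g` is continuous and positive with `p·Y'` differentiable on `(0,∞)`,
the reaction rate `ω` is integrable on `(0,∞)`, the species transport equation
`ṁ·Y' − (p·Y')' = ν·M·ω` holds on `(0,∞)`, the interface species balance
`ṁ = ṁ·Y(0) − p(0)·Y'(0)` holds, and `Y(x) → 0`, `p(x)·Y'(x) → 0` as `x → ∞`,
then `∫₀^∞ ω = −ṁ/(M·ν)`, a positive quantity. -/
theorem reaction_rate_integral
    (ν M mdot : ℝ) (hν : ν < 0) (hM : 0 < M) (hmdot : 0 < mdot)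
    (Y Y' p ω : ℝ → ℝ)
    (hY : ∀ x ∈ Set.Ici (0:ℝ), HasDerivWithinAt Y (Y' x) (Set.Ici 0) x)
    (hY'cont : ContinuousOn Y' (Set.Ici 0))
    (hpcont : ContinuousOn p (Set.Ici 0))
    (hppos : ∀ x ∈ Set.Ici (0:ℝ), 0 < p x)
    (hpYdiff : ∀ x ∈ Set.Ioi (0:ℝ), DifferentiableAt ℝ (fun y => p y * Y' y) x)
    (hωint : MeasureTheory.IntegrableOn ω (Set.Ioi 0))
    (htransport : ∀ x ∈ Set.Ioi (0:ℝ),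
      mdot * Y' x - deriv (fun y => p y * Y' y) x = ν * M * ω x)
    (hinterface : mdot = mdot * Y 0 - p 0 * Y' 0)
    (hYlim : Filter.Tendsto Y Filter.atTop (nhds 0))
    (hpYlim : Filter.Tendsto (fun x => p x * Y' x) Filter.atTop (nhds 0)) :
    (∫ x in Set.Ioi (0:ℝ), ω x) = -mdot / (M * ν) ∧ 0 < -mdot / (M * ν) :=
  reaction_rate_integral_general ν M mdot hν hM hmdot Y Y' p ω hY hY'cont hpcont hpYdiff hωint
    htransport hinterface hYlim hpYlim
end

section
/- Burnt gas temperature (equal specific heats): let c < 0, ṁ = −ρ_s·c > 0, c_p > 0, λ_s, λ_g > 0, D_s = λ_s/(ρ_s·c_p), ν < 0, M > 0, Q_mol ∈ ℝ and Q_p ∈ ℝ. Suppose T : ℝ → ℝ is continuous, C² on (−∞,0) and on (0,∞), with lim_{x→−∞} T(x) = T₀, lim_{x→−∞} T′(x) = 0, lim_{x→+∞} T(x) = T_f and lim_{x→+∞} T′(x) = 0; on the solid side −c·T′(x) − D_s·T″(x) = 0 for x < 0; on the gas side ṁ·T′(x) − (λ_g/c_p)·T″(x) = (Q_mol/c_p)·ω(x)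 for x > 0, where ω is integrable with ∫₀^∞ ω = −ṁ/(M·ν); and the interface energy balance λ_s·T′(0⁻) = ṁ·Q_p + λ_g·T′(0⁺) holds, T being continuous at 0. Then, with Q_g = −Q_mol/(ν·M), the burnt gas temperature satisfies T_f = T₀ + (Q_g + Q_p)/c_p. -/
/-!
Away from the interface, each energy equation says that a combination `α T - β T'` of
temperature and gradient (the convective minus the diffusive heat flux, up to the factor `c_p`)
has derivative equal to the source term. Integrating over each half-line and using the
one-sided limits at the interface together with the limits at `∓∞` gives one flux balance per
phase; on the solid side the flux is conserved, on the gas side it increases by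
`Q_mol/c_p · ∫ ω`. The interface condition eliminates the two gradients at `0`, and what remains
is `ṁ c_p (T_f - T₀) = ṁ (Q_g + Q_p)`.
-/

open Filter Set MeasureTheory Topology Function

theorem integral_Ioi_of_hasDerivAt_of_tendsto_nhdsGT {f f' : ℝ → ℝ} {a l m : ℝ}
    (hfa : Tendsto f (𝓝[>] a) (𝓝 l)) (hderiv : ∀ x ∈ Ioi a, HasDerivAt f (f' x) x)
    (f'int : IntegrableOn f' (Ioi a)) (hf : Tendsto f atTop (𝓝 m)) :
    ∫ x in Ioi a, f' x = m - l := by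
  -- Redefining `f a` as the one-sided limit makes `f` continuous on `Ici a` at `a`.
  classical
  have hcont : ContinuousWithinAt (update f a l) (Ici a) a := by
    rwa [continuousWithinAt_update_same, Ici_sdiff_left]
  have hderiv' : ∀ x ∈ Ioi a, HasDerivAt (update f a l) (f' x) x := fun x hx =>
    (hderiv x hx).congr_of_eventuallyEq <| by
      filter_upwards [eventually_ne_nhds (ne_of_gt hx)] with y hy using update_of_ne hy _ _
  have hf' : Tendsto (update f a l) atTop (𝓝 m) :=
    hf.congr' <| by
      filter_upwards [eventually_ne_atTop a] with y hy using (update_of_ne hy _ _).symm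
  simpa using integral_Ioi_of_hasDerivAt_of_tendsto hcont hderiv' f'int hf'

theorem integral_Iic_of_hasDerivAt_of_tendsto_nhdsLT {f f' : ℝ → ℝ} {a l m : ℝ}
    (hfa : Tendsto f (𝓝[<] a) (𝓝 l)) (hderiv : ∀ x ∈ Iio a, HasDerivAt f (f' x) x)
    (f'int : IntegrableOn f' (Iic a)) (hf : Tendsto f atBot (𝓝 m)) :
    ∫ x in Iic a, f' x = l - m := by
  classical
  have hcont : ContinuousWithinAt (update f a l) (Iic a) a := by
    rwa [continuousWithinAt_update_same, Iic_sdiff_right]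
  have hderiv' : ∀ x ∈ Iio a, HasDerivAt (update f a l) (f' x) x := fun x hx =>
    (hderiv x hx).congr_of_eventuallyEq <| by
      filter_upwards [eventually_ne_nhds (ne_of_lt hx)] with y hy using update_of_ne hy _ _
  have hf' : Tendsto (update f a l) atBot (𝓝 m) :=
    hf.congr' <| by
      filter_upwards [eventually_ne_atBot a] with y hy using (update_of_ne hy _ _).symm
  simpa using integral_Iic_of_hasDerivAt_of_tendsto hcont hderiv' f'int hf'

noncomputable def advectionDiffusionFlux (α β : ℝ) (T : ℝ → ℝ) (x : ℝ) : ℝ :=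
  α * T x - β * deriv T x

section advectionDiffusionFlux

variable {α β : ℝ} {T : ℝ → ℝ}

theorem hasDerivAt_advectionDiffusionFlux {x : ℝ} (hT : DifferentiableAt ℝ T x)
    (hT' : DifferentiableAt ℝ (deriv T) x) :
    HasDerivAt (advectionDiffusionFlux α β T) (α * deriv T x - β * deriv (deriv T) x) x :=
  (hT.hasDerivAt.const_mul α).sub (hT'.hasDerivAt.const_mul β)

theorem tendsto_advectionDiffusionFlux {l : Filter ℝ} {t g : ℝ} (hT : Tendsto T l (𝓝 t))
    (hT' : Tendsto (deriv T) l (𝓝 g)) :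
    Tendsto (advectionDiffusionFlux α β T) l (𝓝 (α * t - β * g)) :=
  (hT.const_mul α).sub (hT'.const_mul β)

end advectionDiffusionFlux

theorem burnt_gas_temperature_equal_specific_heats_general
    (c ρs mdot cp lams lamg ν M Qmol Qp T₀ Tf : ℝ)
    (hc : c < 0) (hρs : 0 < ρs) (hmdot : mdot = -(ρs * c))
    (hcp : 0 < cp)
    (T ω : ℝ → ℝ)
    (hTcont : Continuous T)
    (hTd1 : ∀ x : ℝ, x ≠ 0 → DifferentiableAt ℝ T x)
    (hTd2 : ∀ x : ℝ, x ≠ 0 → DifferentiableAt ℝ (deriv T) x)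
    (hTminf : Filter.Tendsto T Filter.atBot (nhds T₀))
    (hT'minf : Filter.Tendsto (deriv T) Filter.atBot (nhds 0))
    (hTpinf : Filter.Tendsto T Filter.atTop (nhds Tf))
    (hT'pinf : Filter.Tendsto (deriv T) Filter.atTop (nhds 0))
    (hsolid : ∀ x < (0:ℝ),
      -c * deriv T x - (lams / (ρs * cp)) * deriv (deriv T) x = 0)
    (hgas : ∀ x > (0:ℝ),
      mdot * deriv T x - (lamg / cp) * deriv (deriv T) x = (Qmol / cp) * ω x)
    (hωint : MeasureTheory.IntegrableOn ω (Set.Ioi 0))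
    (hωtot : (∫ x in Set.Ioi (0:ℝ), ω x) = -mdot / (M * ν))
    (gl gr : ℝ)
    (hgl : Filter.Tendsto (deriv T) (nhdsWithin 0 (Set.Iio 0)) (nhds gl))
    (hgr : Filter.Tendsto (deriv T) (nhdsWithin 0 (Set.Ioi 0)) (nhds gr))
    (hinterface : lams * gl = mdot * Qp + lamg * gr) :
    Tf = T₀ + (-Qmol / (ν * M) + Qp) / cp := by
  have hT_zero (s : Set ℝ) : Tendsto T (𝓝[s] 0) (𝓝 (T 0)) :=
    hTcont.continuousAt.tendsto.mono_left nhdsWithin_le_nhds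
  have hsolid_integral := integral_Iic_of_hasDerivAt_of_tendsto_nhdsLT (f' := fun _ => 0)
    (tendsto_advectionDiffusionFlux (α := -c) (β := lams / (ρs * cp)) (hT_zero _) hgl)
    (fun x hx => (hasDerivAt_advectionDiffusionFlux (hTd1 x hx.ne) (hTd2 x hx.ne)).congr_deriv
      (hsolid x hx))
    integrableOn_zero (tendsto_advectionDiffusionFlux hTminf hT'minf)
  have hgas_integral := integral_Ioi_of_hasDerivAt_of_tendsto_nhdsGT
    (tendsto_advectionDiffusionFlux (α := mdot) (β := lamg / cp) (hT_zero _) hgr)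
    (fun x hx => (hasDerivAt_advectionDiffusionFlux (hTd1 x hx.ne') (hTd2 x hx.ne')).congr_deriv
      (hgas x hx))
    (hωint.const_mul (Qmol / cp)) (tendsto_advectionDiffusionFlux hTpinf hT'pinf)
  rw [integral_zero] at hsolid_integral
  rw [integral_const_mul, hωtot] at hgas_integral
  have hsolid_flux : lams * gl = mdot * cp * (T 0 - T₀) := by
    field_simp at hsolid_integral
    linear_combination hsolid_integral - cp * (T 0 - T₀) * hmdot
  have hgas_flux : mdot * cp * (Tf - T 0) + lamg * gr = mdot * (-Qmol / (ν * M)) := by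
    rw [mul_comm ν M]
    field_simp at hgas_integral ⊢
    linear_combination -hgas_integral
  have hmdot_ne : mdot ≠ 0 := hmdot ▸ neg_ne_zero.2 (mul_ne_zero hρs.ne' hc.ne)
  have hbalance : mdot * (cp * (Tf - T₀)) = mdot * (-Qmol / (ν * M) + Qp) := by
    linear_combination hgas_flux - hsolid_flux + hinterface
  rw [← mul_left_cancel₀ hmdot_ne hbalance, mul_div_cancel_left₀ _ hcp.ne']
  ring

/-- Burnt gas temperature (equal specific heats `c_s = c_p`): with `c < 0` the
regression velocity, `ṁ = −ρs·c > 0` the mass flow rate, `cp > 0` the common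
specific heat, `lams, lamg > 0` the thermal conductivities, `D_s = lams/(ρs·cp)`,
`ν < 0`, `M > 0`, if the temperature `T` is continuous on `ℝ`, C² away from the
interface `x = 0`, tends to `T₀` (with vanishing gradient) at `−∞` and to `T_f`
(with vanishing gradient) at `+∞`, satisfies the solid heat equation
`−c·T′ − D_s·T″ = 0` on `(−∞,0)` and the gas energy equation
`ṁ·T′ − (lamg/cp)·T″ = (Q_mol/cp)·ω` on `(0,∞)` with `∫₀^∞ ω = −ṁ/(M·ν)`, and the
interface energy balance `lams·T′(0⁻) = ṁ·Q_p + lamg·T′(0⁺)` holds, then with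
`Q_g = −Q_mol/(ν·M)` we have `T_f = T₀ + (Q_g + Q_p)/cp`. -/
theorem burnt_gas_temperature_equal_specific_heats
    (c ρs mdot cp lams lamg ν M Qmol Qp T₀ Tf : ℝ)
    (hc : c < 0) (hρs : 0 < ρs) (hmdot : mdot = -(ρs * c))
    (hcp : 0 < cp) (hlams : 0 < lams) (hlamg : 0 < lamg) (hν : ν < 0) (hM : 0 < M)
    (T ω : ℝ → ℝ)
    (hTcont : Continuous T)
    (hTd1 : ∀ x : ℝ, x ≠ 0 → DifferentiableAt ℝ T x)
    (hTd2 : ∀ x : ℝ, x ≠ 0 → DifferentiableAt ℝ (deriv T) x)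
    (hTminf : Filter.Tendsto T Filter.atBot (nhds T₀))
    (hT'minf : Filter.Tendsto (deriv T) Filter.atBot (nhds 0))
    (hTpinf : Filter.Tendsto T Filter.atTop (nhds Tf))
    (hT'pinf : Filter.Tendsto (deriv T) Filter.atTop (nhds 0))
    (hsolid : ∀ x < (0:ℝ),
      -c * deriv T x - (lams / (ρs * cp)) * deriv (deriv T) x = 0)
    (hgas : ∀ x > (0:ℝ),
      mdot * deriv T x - (lamg / cp) * deriv (deriv T) x = (Qmol / cp) * ω x)
    (hωint : MeasureTheory.IntegrableOn ω (Set.Ioi 0))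
    (hωtot : (∫ x in Set.Ioi (0:ℝ), ω x) = -mdot / (M * ν))
    (gl gr : ℝ)
    (hgl : Filter.Tendsto (deriv T) (nhdsWithin 0 (Set.Iio 0)) (nhds gl))
    (hgr : Filter.Tendsto (deriv T) (nhdsWithin 0 (Set.Ioi 0)) (nhds gr))
    (hinterface : lams * gl = mdot * Qp + lamg * gr) :
    Tf = T₀ + (-Qmol / (ν * M) + Qp) / cp :=
  burnt_gas_temperature_equal_specific_heats_general c ρs mdot cp lams lamg ν M Qmol Qp T₀ Tf hc hρs
    hmdot hcp T ω hTcont hTd1 hTd2 hTminf hT'minf hTpinf hT'pinf hsolid hgas hωint hωtot gl gr hgl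
    hgr hinterface
end

section
/- Constant combustion enthalpy at unit Lewis number: let ṁ > 0, β > 0, c_p > 0, ν < 0, M > 0, Q_mol ∈ ℝ and T₀ ∈ ℝ. Suppose T, Y : [0,∞) → ℝ are bounded, C¹ on [0,∞) and C² on (0,∞), and ω : (0,∞) → ℝ is such that ṁ·T′(x) − β·T″(x) = (Q_mol/c_p)·ω(x) and ṁ·Y′(x) − β·Y″(x) = ν·M·ω(x) for all x > 0. Then the combustion enthalpy h(x) = c_p·(T(x) − T₀) − (Q_mol/(ν·M))·Y(x) is constant on [0,∞). In particular, if moreover lim_{x→∞} Y(x) = 0 and lim_{x→∞} T(x) = T_f, then c_p·(T(x) − T₀) + Q_g·Y(x) = c_p·(T_f − T₀) for all x ≥ 0, where Q_g = −Q_mol/(ν·M). -/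
/-!
At unit Lewis number the Shvab–Zeldovich combination `h = cp (T - T₀) - Q_mol/(ν M) Y`
eliminates the reaction term: `ṁ h' - β h'' = 0` on `(0, ∞)`. Hence `h' = C e^{(ṁ/β) x}` and
`h = a + (C β/ṁ) e^{(ṁ/β) x}`; since `ṁ/β > 0` and `h` is bounded, `C = 0`. Continuity of `h`
at `0` extends the constancy to `[0, ∞)`, and the limits at `+∞` identify the constant.
-/

open Set Filter Real

theorem exists_eq_mul_exp_of_hasDerivAt {s : Set ℝ} (hs : IsOpen s) (hs' : IsPreconnected s)
    {f : ℝ → ℝ} {r : ℝ} (hf : ∀ x ∈ s, HasDerivAt f (r * f x) x) :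
    ∃ C, ∀ x ∈ s, f x = C * exp (r * x) := by
  have hG : ∀ x ∈ s, HasDerivAt (fun x ↦ f x * exp (-r * x)) 0 x := fun x hx ↦
    ((hf x hx).mul ((hasDerivAt_id x).const_mul (-r)).exp).congr_deriv (by ring)
  obtain ⟨C, hC⟩ := hs.exists_is_const_of_deriv_eq_zero hs'
    (fun x hx ↦ (hG x hx).differentiableAt.differentiableWithinAt) fun x hx ↦ (hG x hx).deriv
  refine ⟨C, fun x hx ↦ ?_⟩
  rw [← hC x hx, mul_assoc, ← exp_add]
  simp

theorem eq_zero_of_eventually_abs_mul_exp_le {C r B : ℝ} (hr : 0 < r)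
    (hB : ∀ᶠ x in atTop, |C * exp (r * x)| ≤ B) : C = 0 := by
  by_contra hC
  have hgrow : Tendsto (fun x ↦ |C * exp (r * x)|) atTop atTop := by
    simp only [abs_mul, abs_exp]
    exact (tendsto_exp_atTop.comp (tendsto_id.const_mul_atTop hr)).const_mul_atTop
      (abs_pos.2 hC)
  obtain ⟨x, hxB, hx⟩ := (hB.and (hgrow.eventually_gt_atTop B)).exists
  exact hx.not_ge hxB

theorem exists_const_of_bounded_of_hasDerivAt_deriv_eq_mul {a r : ℝ} (hr : 0 < r)
    {f u : ℝ → ℝ} (hf : ∀ x ∈ Ioi a, HasDerivAt f (u x) x)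
    (hu : ∀ x ∈ Ioi a, HasDerivAt u (r * u x) x) (hbdd : ∃ B, ∀ x ∈ Ioi a, |f x| ≤ B) :
    ∃ c, ∀ x ∈ Ioi a, f x = c := by
  -- The flux `u - r f` is conserved, so `f + K / r` solves `g' = r g`.
  have hF : ∀ x ∈ Ioi a, HasDerivAt (fun x ↦ u x - r * f x) 0 x := fun x hx ↦
    ((hu x hx).sub ((hf x hx).const_mul r)).congr_deriv (sub_self _)
  obtain ⟨K, hK⟩ := isOpen_Ioi.exists_is_const_of_deriv_eq_zero isPreconnected_Ioi
    (fun x hx ↦ (hF x hx).differentiableAt.differentiableWithinAt) fun x hx ↦ (hF x hx).deriv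
  obtain ⟨C, hC⟩ := exists_eq_mul_exp_of_hasDerivAt isOpen_Ioi isPreconnected_Ioi
    (f := fun x ↦ f x + K / r) (r := r) fun x hx ↦ by
      refine ((hf x hx).add_const (K / r)).congr_deriv ?_
      rw [mul_add, mul_div_cancel₀ _ hr.ne', ← hK x hx]
      ring
  obtain ⟨B, hB⟩ := hbdd
  have hC0 : C = 0 := eq_zero_of_eventually_abs_mul_exp_le hr (B := B + |K / r|) <| by
    filter_upwards [eventually_gt_atTop a] with x hx
    rw [← hC x hx]
    exact (abs_add_le _ _).trans (by linarith [hB x hx])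
  exact ⟨-(K / r), fun x hx ↦ by linarith [hC x hx, hC0 ▸ zero_mul (exp (r * x))]⟩

theorem exists_abs_mul_sub_sub_mul_le {s : Set ℝ} {f g : ℝ → ℝ} (a b c : ℝ)
    (hf : ∃ C, ∀ x ∈ s, |f x| ≤ C) (hg : ∃ C, ∀ x ∈ s, |g x| ≤ C) :
    ∃ B, ∀ x ∈ s, |a * (f x - b) - c * g x| ≤ B := by
  obtain ⟨Cf, hCf⟩ := hf
  obtain ⟨Cg, hCg⟩ := hg
  refine ⟨|a| * (Cf + |b|) + |c| * Cg, fun x hx ↦ ?_⟩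
  have hfb : |f x - b| ≤ Cf + |b| := (abs_sub _ _).trans (by linarith [hCf x hx])
  calc |a * (f x - b) - c * g x| ≤ |a| * |f x - b| + |c| * |g x| := by
        simpa only [abs_mul] using abs_sub (a * (f x - b)) (c * g x)
    _ ≤ _ := by gcongr; exact hCg x hx

theorem constant_combustion_enthalpy_general
    (mdot β cp ν M Qmol T₀ Tf : ℝ)
    (hmdot : 0 < mdot) (hβ : 0 < β) (hcp : 0 < cp) (hν : ν < 0) (hM : 0 < M)
    (T Y T' Y' T'' Y'' ω : ℝ → ℝ)
    (hTbdd : ∃ C, ∀ x ∈ Set.Ici (0:ℝ), |T x| ≤ C)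
    (hYbdd : ∃ C, ∀ x ∈ Set.Ici (0:ℝ), |Y x| ≤ C)
    (hT1 : ∀ x ∈ Set.Ici (0:ℝ), HasDerivWithinAt T (T' x) (Set.Ici 0) x)
    (hY1 : ∀ x ∈ Set.Ici (0:ℝ), HasDerivWithinAt Y (Y' x) (Set.Ici 0) x)
    (hT2 : ∀ x ∈ Set.Ioi (0:ℝ), HasDerivAt T' (T'' x) x)
    (hY2 : ∀ x ∈ Set.Ioi (0:ℝ), HasDerivAt Y' (Y'' x) x)
    (hTeq : ∀ x ∈ Set.Ioi (0:ℝ), mdot * T' x - β * T'' x = (Qmol / cp) * ω x)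
    (hYeq : ∀ x ∈ Set.Ioi (0:ℝ), mdot * Y' x - β * Y'' x = ν * M * ω x) :
    (∀ x ∈ Set.Ici (0:ℝ),
      cp * (T x - T₀) - (Qmol / (ν * M)) * Y x
        = cp * (T 0 - T₀) - (Qmol / (ν * M)) * Y 0) ∧
    (Filter.Tendsto Y Filter.atTop (nhds 0) →
      Filter.Tendsto T Filter.atTop (nhds Tf) →
      ∀ x ∈ Set.Ici (0:ℝ),
        cp * (T x - T₀) + (-Qmol / (ν * M)) * Y x = cp * (Tf - T₀)) := by
  set k := Qmol / (ν * M) with hk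
  have hkνM : k * (ν * M) = Qmol := div_mul_cancel₀ _ (mul_neg_of_neg_of_pos hν hM).ne
  clear_value k
  set h : ℝ → ℝ := fun x ↦ cp * (T x - T₀) - k * Y x
  have hdh : ∀ x ∈ Ici (0:ℝ), HasDerivWithinAt h (cp * T' x - k * Y' x) (Ici 0) x := fun x hx ↦
    (((hT1 x hx).sub_const T₀).const_mul cp).sub ((hY1 x hx).const_mul k)
  -- Lewis number one: the reaction terms cancel in the equation for `h`.
  have hdh' : ∀ x ∈ Ioi (0:ℝ), HasDerivAt (fun x ↦ cp * T' x - k * Y' x)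
      (mdot / β * (cp * T' x - k * Y' x)) x := fun x hx ↦ by
    refine (((hT2 x hx).const_mul cp).sub ((hY2 x hx).const_mul k)).congr_deriv ?_
    have hcp' : cp * (Qmol / cp) = Qmol := mul_div_cancel₀ _ hcp.ne'
    rw [div_mul_eq_mul_div, eq_div_iff hβ.ne']
    linear_combination (-cp) * hTeq x hx + k * hYeq x hx - ω x * hcp' + ω x * hkνM
  obtain ⟨B, hB⟩ := exists_abs_mul_sub_sub_mul_le cp T₀ k hTbdd hYbdd
  obtain ⟨c, hc⟩ := exists_const_of_bounded_of_hasDerivAt_deriv_eq_mul (div_pos hmdot hβ)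
    (fun x hx ↦ (hdh x (mem_Ici.2 hx.le)).hasDerivAt (Ici_mem_nhds hx)) hdh'
    ⟨B, fun x hx ↦ hB x (mem_Ici.2 hx.le)⟩
  have hconst : EqOn h (fun _ ↦ c) (Ici 0) :=
    EqOn.of_subset_closure hc (fun x hx ↦ (hdh x hx).continuousWithinAt) continuousOn_const
      Ioi_subset_Ici_self (closure_Ioi (0:ℝ)).ge
  refine ⟨fun x hx ↦ (hconst hx).trans (hconst self_mem_Ici).symm, fun hY hT x hx ↦ ?_⟩
  have hlim : Tendsto h atTop (nhds (cp * (Tf - T₀) - k * 0)) :=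
    ((hT.sub_const T₀).const_mul cp).sub (hY.const_mul k)
  have hlim' : Tendsto h atTop (nhds c) :=
    tendsto_const_nhds.congr' ((eventually_ge_atTop 0).mono fun x hx ↦ (hconst hx).symm)
  have hc_eq : c = cp * (Tf - T₀) := by
    simpa using tendsto_nhds_unique hlim' hlim
  rw [neg_div, ← hk, neg_mul, ← sub_eq_add_neg, ← hc_eq]
  exact hconst hx

/-- Constant combustion enthalpy at unit Lewis number: with `ṁ > 0` the mass flow rate,
`β = λg/cp > 0` the common diffusion factor, `cp > 0`, `ν < 0`, `M > 0`, if the bounded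
temperature `T` and reactant mass fraction `Y` are C¹ on `[0,∞)` (with derivatives
`T'`, `Y'`), C² on `(0,∞)` (with second derivatives `T''`, `Y''`), and satisfy
`ṁ·T′ − β·T″ = (Q_mol/cp)·ω` and `ṁ·Y′ − β·Y″ = ν·M·ω` on `(0,∞)`, then the
combustion enthalpy `h(x) = cp·(T(x) − T₀) − (Q_mol/(ν·M))·Y(x)` is constant on
`[0,∞)`; in particular, if moreover `Y → 0` and `T → T_f` at `+∞`, then
`cp·(T(x) − T₀) + Q_g·Y(x) = cp·(T_f − T₀)` for all `x ≥ 0`, where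
`Q_g = −Q_mol/(ν·M)`. -/
theorem constant_combustion_enthalpy
    (mdot β cp ν M Qmol T₀ Tf : ℝ)
    (hmdot : 0 < mdot) (hβ : 0 < β) (hcp : 0 < cp) (hν : ν < 0) (hM : 0 < M)
    (T Y T' Y' T'' Y'' ω : ℝ → ℝ)
    (hTbdd : ∃ C, ∀ x ∈ Set.Ici (0:ℝ), |T x| ≤ C)
    (hYbdd : ∃ C, ∀ x ∈ Set.Ici (0:ℝ), |Y x| ≤ C)
    (hT1 : ∀ x ∈ Set.Ici (0:ℝ), HasDerivWithinAt T (T' x) (Set.Ici 0) x)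
    (hY1 : ∀ x ∈ Set.Ici (0:ℝ), HasDerivWithinAt Y (Y' x) (Set.Ici 0) x)
    (hT'cont : ContinuousOn T' (Set.Ici 0))
    (hY'cont : ContinuousOn Y' (Set.Ici 0))
    (hT2 : ∀ x ∈ Set.Ioi (0:ℝ), HasDerivAt T' (T'' x) x)
    (hY2 : ∀ x ∈ Set.Ioi (0:ℝ), HasDerivAt Y' (Y'' x) x)
    (hTeq : ∀ x ∈ Set.Ioi (0:ℝ), mdot * T' x - β * T'' x = (Qmol / cp) * ω x)
    (hYeq : ∀ x ∈ Set.Ioi (0:ℝ), mdot * Y' x - β * Y'' x = ν * M * ω x) :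
    (∀ x ∈ Set.Ici (0:ℝ),
      cp * (T x - T₀) - (Qmol / (ν * M)) * Y x
        = cp * (T 0 - T₀) - (Qmol / (ν * M)) * Y 0) ∧
    (Filter.Tendsto Y Filter.atTop (nhds 0) →
      Filter.Tendsto T Filter.atTop (nhds Tf) →
      ∀ x ∈ Set.Ici (0:ℝ),
        cp * (T x - T₀) + (-Qmol / (ν * M)) * Y x = cp * (Tf - T₀)) :=
  constant_combustion_enthalpy_general mdot β cp ν M Qmol T₀ Tf hmdot hβ hcp hν hM T Y T' Y' T'' Y''
    ω hTbdd hYbdd hT1 hY1 hT2 hY2 hTeq hYeq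
end

section
/- Monotonicity of the temperature in the gas phase: let c < 0, η > 0 and θ_s ∈ (0,1). Let Ψ : ℝ → ℝ be locally Lipschitz with Ψ(s) > 0 for s < 1 and Ψ(s) = 0 for s ≥ 1. Let θ : [0,∞) → ℝ be C² with θ(0) = θ_s, lim_{x→∞} θ(x) = 1, and η·c·θ′(x) + θ″(x) = −Ψ(θ(x)) for all x > 0. Then θ′(x) > 0 for all x > 0; in particular θ is strictly increasing on [0,∞) and θ(x) < 1 for all x ≥ 0, so θ is a bijection from [0,∞) onto [θ_s,1). -/
/-!
Write `a = -ηc`, so that `θ'' = a θ' - Ψ(θ)`. Since `Ψ ≥ 0`, `e^{-ax} θ'` is nonincreasing, so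
once `θ'` is `≤ 0` it stays `≤ 0`; then `θ` decreases to its limit and `θ ≥ 1` there. If `θ'`
were ever `≤ 0` it would also vanish somewhere, since `θ(0) < 1` forces `θ' > 0` somewhere
before; there the pair `(θ, θ')` would sit at an equilibrium `(θ₁, 0)` with `θ₁ ≥ 1`,
`Ψ(θ₁) = 0`; by uniqueness for the locally Lipschitz system it would have been there all along,
contradicting `θ(0) < 1`. Hence `θ' > 0`, and the rest follows from monotonicity and the IVT.
-/

open Set Filter Topology

def travellingWaveField (a : ℝ) (Ψ : ℝ → ℝ) (p : ℝ × ℝ) : ℝ × ℝ :=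
  (p.2, a * p.2 - Ψ p.1)

theorem LocallyLipschitz.travellingWaveField {Ψ : ℝ → ℝ} (hΨ : LocallyLipschitz Ψ) (a : ℝ) :
    LocallyLipschitz (travellingWaveField a Ψ) := by
  have hsnd : LocallyLipschitz (Prod.snd : ℝ × ℝ → ℝ) := LipschitzWith.prod_snd.locallyLipschitz
  exact hsnd.prodMk (((lipschitzWith_smul a).locallyLipschitz.comp hsnd).sub
    (hΨ.comp LipschitzWith.prod_fst.locallyLipschitz))

theorem ODE_solution_eqOn_const_of_mem_Icc_left {E : Type*} [NormedAddCommGroup E]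
    [NormedSpace ℝ E] {v : E → E} (hv : LocallyLipschitz v) {p : E} (hp : v p = 0)
    {F : ℝ → E} {a b : ℝ} (hF : ∀ t ∈ Icc a b, HasDerivAt F (v (F t)) t) (hb : F b = p) :
    EqOn F (fun _ ↦ p) (Icc a b) := by
  have hFc : ContinuousOn F (Icc a b) := fun t ht ↦ (hF t ht).continuousAt.continuousWithinAt
  obtain ⟨K, hK⟩ := hv.locallyLipschitzOn.exists_lipschitzOnWith_of_compact
    ((isCompact_Icc.image_of_continuousOn hFc).union (isCompact_singleton (x := p)))
  refine ODE_solution_unique_of_mem_Icc_left (v := fun _ ↦ v) (fun _ _ ↦ hK) hFc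
    (fun t ht ↦ (hF t (Ioc_subset_Icc_self ht)).hasDerivWithinAt)
    (fun t ht ↦ .inl (mem_image_of_mem F (Ioc_subset_Icc_self ht))) continuousOn_const
    (fun t _ ↦ by simpa [hp] using hasDerivWithinAt_const t (Iic t) p)
    (fun _ _ ↦ .inr rfl) hb

theorem nonpos_of_hasDerivAt_le_mul_self {a x₀ : ℝ} {g g' : ℝ → ℝ}
    (hg : ∀ x ≥ x₀, HasDerivAt g (g' x) x) (hg' : ∀ x ≥ x₀, g' x ≤ a * g x) (h₀ : g x₀ ≤ 0)
    {x : ℝ} (hx : x₀ ≤ x) : g x ≤ 0 := by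
  have hφ : ∀ x ≥ x₀, HasDerivAt (fun x ↦ Real.exp (-a * x) * g x)
      (Real.exp (-a * x) * (g' x - a * g x)) x := fun x hx ↦
    ((((hasDerivAt_id' x).const_mul (-a)).exp).mul (hg x hx)).congr_deriv (by ring)
  have hanti : AntitoneOn (fun x ↦ Real.exp (-a * x) * g x) (Ici x₀) :=
    antitoneOn_of_hasDerivWithinAt_nonpos (convex_Ici x₀)
      (fun x hx ↦ (hφ x hx).continuousAt.continuousWithinAt)
      (fun x hx ↦ (hφ x (interior_subset hx)).hasDerivWithinAt)
      (fun x hx ↦ mul_nonpos_of_nonneg_of_nonpos (Real.exp_pos _).le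
        (sub_nonpos.2 (hg' x (interior_subset hx))))
  have : Real.exp (-a * x) * g x ≤ 0 :=
    (hanti self_mem_Ici hx hx).trans (mul_nonpos_of_nonneg_of_nonpos (Real.exp_pos _).le h₀)
  exact nonpos_of_mul_nonpos_right this (Real.exp_pos _)

theorem StrictMonoOn.lt_of_tendsto_atTop {f : ℝ → ℝ} {a L : ℝ} (hf : StrictMonoOn f (Ici a))
    (hlim : Tendsto f atTop (𝓝 L)) {x : ℝ} (hx : a ≤ x) : f x < L := by
  have hle : f (x + 1) ≤ L := ge_of_tendsto hlim <| by
    filter_upwards [eventually_ge_atTop (x + 1)] with y hy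
    exact hf.monotoneOn (mem_Ici.2 (by linarith)) (mem_Ici.2 (by linarith)) hy
  exact (hf hx (mem_Ici.2 (by linarith)) (lt_add_one x)).trans_le hle

theorem StrictMonoOn.bijOn_Ici_Ico {f : ℝ → ℝ} {a L : ℝ} (hf : StrictMonoOn f (Ici a))
    (hc : ContinuousOn f (Ici a)) (hlim : Tendsto f atTop (𝓝 L)) :
    BijOn f (Ici a) (Ico (f a) L) := by
  refine ⟨fun x hx ↦ ⟨hf.monotoneOn self_mem_Ici hx hx, hf.lt_of_tendsto_atTop hlim hx⟩,
    hf.injOn, fun y hy ↦ ?_⟩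
  obtain ⟨b, hyb, hab⟩ : ∃ b, y < f b ∧ a ≤ b :=
    ((hlim.eventually (eventually_gt_nhds hy.2)).and (eventually_ge_atTop a)).exists
  obtain ⟨x, hx, rfl⟩ := intermediate_value_Icc hab (hc.mono Icc_subset_Ici_self) ⟨hy.1, hyb.le⟩
  exact ⟨x, hx.1, rfl⟩

namespace TravellingWave

variable {a L : ℝ} {Ψ θ θ' : ℝ → ℝ}

theorem le_of_tendsto_of_derivative_nonpos (hΨ : ∀ s, 0 ≤ Ψ s)
    (hθ : ∀ x > 0, HasDerivAt θ (θ' x) x)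
    (hθ' : ∀ x > 0, HasDerivAt θ' (a * θ' x - Ψ (θ x)) x)
    (hlim : Tendsto θ atTop (𝓝 L)) {x₀ : ℝ} (hx₀ : 0 < x₀) (h : θ' x₀ ≤ 0) : L ≤ θ x₀ := by
  have hnonpos : ∀ x ≥ x₀, θ' x ≤ 0 := fun x hx ↦
    nonpos_of_hasDerivAt_le_mul_self (a := a) (fun y hy ↦ hθ' y (hx₀.trans_le hy))
      (fun y _ ↦ by linarith [hΨ (θ y)]) h hx
  have hanti : AntitoneOn θ (Ici x₀) :=
    antitoneOn_of_hasDerivWithinAt_nonpos (convex_Ici x₀)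
      (fun x hx ↦ (hθ x (hx₀.trans_le hx)).continuousAt.continuousWithinAt)
      (fun x hx ↦ (hθ x (hx₀.trans (interior_Ici.subset hx))).hasDerivWithinAt)
      (fun x hx ↦ hnonpos x (interior_subset hx))
  refine le_of_tendsto hlim ?_
  filter_upwards [eventually_ge_atTop x₀] with y hy
  exact hanti self_mem_Ici hy hy

theorem derivative_pos (hΨ : LocallyLipschitz Ψ) (hΨnonneg : ∀ s, 0 ≤ Ψ s)
    (hΨzero : ∀ s ≥ L, Ψ s = 0) (hcont : ContinuousOn θ (Ici 0))
    (hθ : ∀ x > 0, HasDerivAt θ (θ' x) x)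
    (hθ' : ∀ x > 0, HasDerivAt θ' (a * θ' x - Ψ (θ x)) x)
    (hlim : Tendsto θ atTop (𝓝 L)) (h0 : θ 0 < L) {x : ℝ} (hx : 0 < x) : 0 < θ' x := by
  by_contra! h
  have hLx := le_of_tendsto_of_derivative_nonpos hΨnonneg hθ hθ' hlim hx h
  obtain ⟨ξ, hξ, hξslope⟩ := exists_hasDerivAt_eq_slope θ θ' hx (hcont.mono Icc_subset_Ici_self)
    (fun y hy ↦ hθ y hy.1)
  have hξpos : 0 < θ' ξ := by
    rw [hξslope]
    exact div_pos (by linarith) (by linarith)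
  obtain ⟨x₁, hx₁, hθ'x₁⟩ := intermediate_value_Icc' hξ.2.le
    (fun y hy ↦ (hθ' y (hξ.1.trans_le hy.1)).continuousAt.continuousWithinAt) ⟨h, hξpos.le⟩
  have hx₁pos : 0 < x₁ := hξ.1.trans_le hx₁.1
  have hLx₁ := le_of_tendsto_of_derivative_nonpos hΨnonneg hθ hθ' hlim hx₁pos hθ'x₁.le
  have hconst : ∀ y ∈ Ioc 0 x₁, θ y = θ x₁ := fun y hy ↦ congrArg Prod.fst <|
    ODE_solution_eqOn_const_of_mem_Icc_left (hΨ.travellingWaveField a) (p := (θ x₁, 0))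
      (by simp [travellingWaveField, hΨzero _ hLx₁])
      (fun t ht ↦ (hθ t (hy.1.trans_le ht.1)).prodMk (hθ' t (hy.1.trans_le ht.1)))
      (by rw [hθ'x₁]) (left_mem_Icc.2 hy.2)
  have hθ0 : θ 0 = θ x₁ :=
    tendsto_nhds_unique ((hcont 0 self_mem_Ici).mono Ioi_subset_Ici_self)
      (tendsto_const_nhds.congr' (eventuallyEq_of_mem (Ioc_mem_nhdsGT hx₁pos)
        fun y hy ↦ (hconst y hy).symm))
  linarith

end TravellingWave

theorem gas_phase_temperature_monotone_general
    (c η θs : ℝ) (hθs : θs ∈ Set.Ioo (0:ℝ) 1)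
    (Ψ : ℝ → ℝ)
    (hΨlip : LocallyLipschitz Ψ)
    (hΨpos : ∀ s < (1:ℝ), 0 < Ψ s)
    (hΨzero : ∀ s ≥ (1:ℝ), Ψ s = 0)
    (θ : ℝ → ℝ)
    (hcont : ContinuousOn θ (Set.Ici 0))
    (hd1 : ∀ x > (0:ℝ), DifferentiableAt ℝ θ x)
    (hd2 : ∀ x > (0:ℝ), DifferentiableAt ℝ (deriv θ) x)
    (h0 : θ 0 = θs)
    (hlim : Filter.Tendsto θ Filter.atTop (nhds 1))
    (hode : ∀ x > (0:ℝ), η * c * deriv θ x + deriv (deriv θ) x = -Ψ (θ x)) :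
    (∀ x > (0:ℝ), 0 < deriv θ x) ∧
    StrictMonoOn θ (Set.Ici 0) ∧
    (∀ x ≥ (0:ℝ), θ x < 1) ∧
    Set.BijOn θ (Set.Ici 0) (Set.Ico θs 1) := by
  have hΨnonneg : ∀ s, 0 ≤ Ψ s := fun s ↦
    (lt_or_ge s 1).elim (fun h ↦ (hΨpos s h).le) (fun h ↦ (hΨzero s h).ge)
  have hθ : ∀ x > 0, HasDerivAt θ (deriv θ x) x := fun x hx ↦ (hd1 x hx).hasDerivAt
  have hθ' : ∀ x > 0, HasDerivAt (deriv θ) (-(η * c) * deriv θ x - Ψ (θ x)) x := fun x hx ↦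
    (hd2 x hx).hasDerivAt.congr_deriv (by linear_combination hode x hx)
  have hpos : ∀ x > 0, 0 < deriv θ x := fun x hx ↦
    TravellingWave.derivative_pos hΨlip hΨnonneg hΨzero hcont hθ hθ' hlim (h0 ▸ hθs.2) hx
  have hmono : StrictMonoOn θ (Ici 0) :=
    strictMonoOn_of_deriv_pos (convex_Ici 0) hcont (fun x hx ↦ hpos x (interior_Ici.subset hx))
  exact ⟨hpos, hmono, fun x hx ↦ hmono.lt_of_tendsto_atTop hlim hx,
    h0 ▸ hmono.bijOn_Ici_Ico hcont hlim⟩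

/-- Monotonicity of the temperature in the gas phase: with `c < 0` the dimensionless
regression velocity, `η > 0` the conductivity ratio and `θs ∈ (0,1)` the surface
temperature, if the dimensionless heat source `Ψ` is locally Lipschitz, positive below
`1` and zero at and above `1`, and the dimensionless temperature `θ` is C² on `[0,∞)`
with `θ(0) = θs`, `θ(x) → 1` as `x → ∞`, and `η·c·θ′ + θ″ = −Ψ(θ)` on `(0,∞)`, then
`θ′ > 0` on `(0,∞)`; in particular `θ` is strictly increasing on `[0,∞)`, `θ < 1`
everywhere, and `θ` is a bijection from `[0,∞)` onto `[θs,1)`. -/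
theorem gas_phase_temperature_monotone
    (c η θs : ℝ) (hc : c < 0) (hη : 0 < η) (hθs : θs ∈ Set.Ioo (0:ℝ) 1)
    (Ψ : ℝ → ℝ)
    (hΨlip : LocallyLipschitz Ψ)
    (hΨpos : ∀ s < (1:ℝ), 0 < Ψ s)
    (hΨzero : ∀ s ≥ (1:ℝ), Ψ s = 0)
    (θ : ℝ → ℝ)
    (hcont : ContinuousOn θ (Set.Ici 0))
    (hd1 : ∀ x > (0:ℝ), DifferentiableAt ℝ θ x)
    (hd2 : ∀ x > (0:ℝ), DifferentiableAt ℝ (deriv θ) x)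
    (h0 : θ 0 = θs)
    (hlim : Filter.Tendsto θ Filter.atTop (nhds 1))
    (hode : ∀ x > (0:ℝ), η * c * deriv θ x + deriv (deriv θ) x = -Ψ (θ x)) :
    (∀ x > (0:ℝ), 0 < deriv θ x) ∧
    StrictMonoOn θ (Set.Ici 0) ∧
    (∀ x ≥ (0:ℝ), θ x < 1) ∧
    Set.BijOn θ (Set.Ici 0) (Set.Ico θs 1) :=
  gas_phase_temperature_monotone_general c η θs hθs Ψ hΨlip hΨpos hΨzero θ hcont hd1 hd2 h0 hlim
    hode
end

section
/- Monotone dependence of the gas-phase phase portrait on the wave velocity: let η > 0, a ∈ [0,1), and c₁ < c₂ ≤ 0. Let Ψ : [a,1] → ℝ be continuous with Ψ ≥ 0. For i = 1, 2 let γᵢ : [a,1] → ℝ be continuous with γᵢ(1) = 0, γᵢ > 0 on [a,1), C¹ on [a,1), satisfying γᵢ(θ)·γᵢ′(θ) + η·cᵢ·γᵢ(θ) = −Ψ(θ) for θ ∈ (a,1). Then γ₁(θ) < γ₂(θ) for every θ ∈ [a,1). In particular the gas heat feedback γ_c(a) at the lower endpoint is strictly increasing in c at fixed endpoint a. -/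
open Set

/-- Auxiliary positivity lemma: if `p` is continuous on `[a,1]`, vanishes at `1`,
and satisfies `p' = q·p − δ` on `(a,1)` with `q ≥ 0` continuous on `[a,1)` and
`δ > 0`, then `p > 0` on `[a,1)`. -/
lemma aux_pos_of_ode (a : ℝ) (ha1 : a < 1) (p q : ℝ → ℝ) (δ : ℝ) (hδpos : 0 < δ)
    (hpcont : ContinuousOn p (Icc a 1)) (hp1 : p 1 = 0)
    (hqcont : ContinuousOn q (Ico a 1))
    (hqnonneg : ∀ θ ∈ Ico a 1, 0 ≤ q θ)
    (hpderiv : ∀ θ ∈ Ioo a 1, HasDerivAt p (q θ * p θ - δ) θ) :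
    ∀ θ ∈ Ico a 1, 0 < p θ := by
  by_contra hcon
  push_neg at hcon
  obtain ⟨θ₀, hθ₀, hpθ₀⟩ := hcon
  by_cases hex : ∃ t₁ ∈ Ioo θ₀ 1, 0 < p t₁
  · obtain ⟨t₁, ht₁, hpt₁⟩ := hex
    have ht₁1 : t₁ < 1 := ht₁.2
    have hat₁ : Icc θ₀ t₁ ⊆ Ico a 1 := fun s hs => ⟨le_trans hθ₀.1 hs.1, lt_of_le_of_lt hs.2 ht₁1⟩
    have hIccsub : Icc θ₀ t₁ ⊆ Icc a 1 :=
      fun s hs => ⟨le_trans hθ₀.1 hs.1, le_of_lt (lt_of_le_of_lt hs.2 ht₁1)⟩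
    -- the last point ≤ t₁ where p ≤ 0
    obtain ⟨T, hTS, hTub⟩ : ∃ T ∈ Icc θ₀ t₁ ∩ p ⁻¹' Iic 0,
        ∀ s ∈ Icc θ₀ t₁ ∩ p ⁻¹' Iic 0, s ≤ T := by
      have hSne : (Icc θ₀ t₁ ∩ p ⁻¹' Iic 0).Nonempty := ⟨θ₀, ⟨le_refl _, ht₁.1.le⟩, hpθ₀⟩
      have hSbdd : BddAbove (Icc θ₀ t₁ ∩ p ⁻¹' Iic 0) := ⟨t₁, fun s hs => hs.1.2⟩
      have hSclosed : IsClosed (Icc θ₀ t₁ ∩ p ⁻¹' Iic 0) :=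
        (hpcont.mono hIccsub).preimage_isClosed_of_isClosed isClosed_Icc isClosed_Iic
      exact ⟨_, hSclosed.csSup_mem hSne hSbdd, fun s hs => le_csSup hSbdd hs⟩
    have hpT : p T ≤ 0 := hTS.2
    have hTlt : T < t₁ := lt_of_le_of_ne hTS.1.2 (by
      intro h; rw [h] at hpT; linarith)
    have hTmem : T ∈ Ico a 1 := hat₁ hTS.1
    -- p is positive on (T, t₁]
    have hppos : ∀ s ∈ Ioc T t₁, 0 < p s := by
      intro s hs
      by_contra h
      push_neg at h
      exact absurd (hTub s ⟨⟨le_trans hTS.1.1 hs.1.le, hs.2⟩, h⟩) (not_le.mpr hs.1)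
    -- hence p T = 0
    have hpT0 : p T = 0 := by
      refine le_antisymm hpT ?_
      have htend : Filter.Tendsto p (nhdsWithin T (Ioc T t₁)) (nhds (p T)) := by
        refine ((hpcont.continuousWithinAt ⟨hTmem.1, hTmem.2.le⟩).mono ?_).tendsto
        intro s hs
        exact ⟨le_trans hTmem.1 hs.1.le, le_of_lt (lt_of_le_of_lt hs.2 ht₁1)⟩
      rw [nhdsWithin_Ioc_eq_nhdsGT hTlt] at htend
      refine ge_of_tendsto htend ?_
      filter_upwards [Ioc_mem_nhdsGT_of_mem ⟨le_refl T, hTlt⟩] with s hs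
      exact (hppos s hs).le
    -- bound q on [T, t₁]
    have hsub : Icc T t₁ ⊆ Ico a 1 := fun s hs => hat₁ ⟨le_trans hTS.1.1 hs.1, hs.2⟩
    obtain ⟨x, hx, hxmax⟩ :=
      isCompact_Icc.exists_isMaxOn (nonempty_Icc.mpr hTlt.le) (hqcont.mono hsub)
    obtain ⟨M, hMpos, hqM⟩ : ∃ M > 0, ∀ s ∈ Icc T t₁, q s ≤ M := by
      refine ⟨q x + 1, by have := hqnonneg x (hsub hx); linarith, fun s hs => ?_⟩
      have h2 : q s ≤ q x := hxmax hs
      linarith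
    -- continuity of p at T: find ε
    have hcw : ContinuousWithinAt p (Icc a 1) T := hpcont.continuousWithinAt ⟨hTmem.1, hTmem.2.le⟩
    rw [Metric.continuousWithinAt_iff] at hcw
    obtain ⟨ε₀, hε₀, hε₀p⟩ := hcw (δ / (2 * M)) (by positivity)
    obtain ⟨ε, hεpos, hεt₁, hεε₀⟩ : ∃ ε > 0, T + ε ≤ t₁ ∧ ε < ε₀ := by
      refine ⟨min (ε₀ / 2) (t₁ - T), lt_min (by linarith) (by linarith), ?_, ?_⟩
      · have : min (ε₀ / 2) (t₁ - T) ≤ t₁ - T := min_le_right _ _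
        linarith
      · have : min (ε₀ / 2) (t₁ - T) ≤ ε₀ / 2 := min_le_left _ _
        linarith
    have hsmall : ∀ s ∈ Icc T (T + ε), p s < δ / (2 * M) := by
      intro s hs
      have hs1 : s ∈ Icc a 1 :=
        ⟨le_trans hTmem.1 hs.1, le_trans (le_trans hs.2 hεt₁) ht₁1.le⟩
      have hd : dist s T < ε₀ := by
        rw [Real.dist_eq, abs_of_nonneg (by linarith [hs.1])]
        linarith [hs.2, hs.1]
      have := hε₀p hs1 hd
      rw [Real.dist_eq, hpT0, sub_zero] at this
      exact lt_of_le_of_lt (le_abs_self _) this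
    -- mean value theorem on [T, T+ε]
    have hTε : T < T + ε := by linarith
    have hcontTε : ContinuousOn p (Icc T (T + ε)) := by
      refine hpcont.mono ?_
      intro s hs
      exact ⟨le_trans hTmem.1 hs.1, le_trans (le_trans hs.2 hεt₁) ht₁1.le⟩
    have hderivTε : ∀ s ∈ Ioo T (T + ε), HasDerivAt p (q s * p s - δ) s := by
      intro s hs
      refine hpderiv s ⟨lt_of_le_of_lt hTmem.1 hs.1, ?_⟩
      exact lt_of_lt_of_le hs.2 (le_trans hεt₁ ht₁1.le)
    obtain ⟨ξ, hξ, hslope⟩ :=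
      exists_hasDerivAt_eq_slope p (fun s => q s * p s - δ) hTε hcontTε hderivTε
    have hξIcc : ξ ∈ Icc T t₁ := ⟨hξ.1.le, le_trans hξ.2.le hεt₁⟩
    have hpξpos : 0 < p ξ := hppos ξ ⟨hξ.1, hξIcc.2⟩
    have hpξsmall : p ξ < δ / (2 * M) := hsmall ξ ⟨hξ.1.le, hξ.2.le⟩
    have hqξ : q ξ ≤ M := hqM ξ hξIcc
    have hd1 : q ξ * p ξ ≤ M * p ξ := mul_le_mul_of_nonneg_right hqξ hpξpos.le
    have hd2 : M * p ξ < δ / 2 := by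
      have h := mul_lt_mul_of_pos_left hpξsmall hMpos
      have heq : M * (δ / (2 * M)) = δ / 2 := by
        field_simp
      linarith [h, heq.le, heq.ge]
    have hpTε : 0 < p (T + ε) := hppos (T + ε) ⟨hTε, hεt₁⟩
    rw [hpT0, sub_zero] at hslope
    have hpos : 0 < p (T + ε) / (T + ε - T) := div_pos hpTε (by linarith)
    rw [← hslope] at hpos
    linarith
  · -- p ≤ 0 on all of (θ₀, 1): MVT on [θ₀, 1] contradicts p 1 = 0
    push_neg at hex
    have hθ₀1 : θ₀ < 1 := hθ₀.2
    have hcont : ContinuousOn p (Icc θ₀ 1) :=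
      hpcont.mono (fun s hs => ⟨le_trans hθ₀.1 hs.1, hs.2⟩)
    have hderiv : ∀ s ∈ Ioo θ₀ 1, HasDerivAt p (q s * p s - δ) s := by
      intro s hs
      exact hpderiv s ⟨lt_of_le_of_lt hθ₀.1 hs.1, hs.2⟩
    obtain ⟨ξ, hξ, hslope⟩ :=
      exists_hasDerivAt_eq_slope p (fun s => q s * p s - δ) hθ₀1 hcont hderiv
    have hξIco : ξ ∈ Ico a 1 := ⟨le_trans hθ₀.1 hξ.1.le, hξ.2⟩
    have hpξ : p ξ ≤ 0 := hex ξ hξ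
    have hqξ : 0 ≤ q ξ := hqnonneg ξ hξIco
    have h1 : q ξ * p ξ ≤ 0 := mul_nonpos_of_nonneg_of_nonpos hqξ hpξ
    have h2 : 0 ≤ (p 1 - p θ₀) / (1 - θ₀) := by
      apply div_nonneg _ (by linarith)
      rw [hp1]; linarith
    linarith [hslope]

/-- Monotone dependence of the gas-phase phase portrait on the wave velocity: with
`η > 0`, lower endpoint `a ∈ [0,1)` and velocities `c₁ < c₂ ≤ 0`, if `Ψ` is continuous
and nonnegative on `[a,1]` and for `i = 1,2` the function `γᵢ` is continuous on
`[a,1]` with `γᵢ(1) = 0`, positive on `[a,1)`, C¹ on `[a,1)` (derivative `γᵢ'` within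
`[a,1]`), and satisfies `γᵢ·γᵢ′ + η·cᵢ·γᵢ = −Ψ` on `(a,1)`, then `γ₁ < γ₂` on `[a,1)`;
in particular the gas heat feedback at the lower endpoint is strictly increasing
in the wave velocity. -/
theorem phase_portrait_monotone_in_velocity
    (η a c₁ c₂ : ℝ) (hη : 0 < η) (ha : a ∈ Set.Ico (0:ℝ) 1)
    (hc12 : c₁ < c₂) (hc2 : c₂ ≤ 0)
    (Ψ γ₁ γ₂ γ₁' γ₂' : ℝ → ℝ)
    (hΨcont : ContinuousOn Ψ (Set.Icc a 1))
    (hΨnonneg : ∀ θ ∈ Set.Icc a 1, 0 ≤ Ψ θ)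
    (hγ₁cont : ContinuousOn γ₁ (Set.Icc a 1))
    (hγ₂cont : ContinuousOn γ₂ (Set.Icc a 1))
    (hγ₁1 : γ₁ 1 = 0) (hγ₂1 : γ₂ 1 = 0)
    (hγ₁pos : ∀ θ ∈ Set.Ico a 1, 0 < γ₁ θ)
    (hγ₂pos : ∀ θ ∈ Set.Ico a 1, 0 < γ₂ θ)
    (hγ₁deriv : ∀ θ ∈ Set.Ico a 1, HasDerivWithinAt γ₁ (γ₁' θ) (Set.Icc a 1) θ)
    (hγ₂deriv : ∀ θ ∈ Set.Ico a 1, HasDerivWithinAt γ₂ (γ₂' θ) (Set.Icc a 1) θ)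
    (hode₁ : ∀ θ ∈ Set.Ioo a 1, γ₁ θ * γ₁' θ + η * c₁ * γ₁ θ = -Ψ θ)
    (hode₂ : ∀ θ ∈ Set.Ioo a 1, γ₂ θ * γ₂' θ + η * c₂ * γ₂ θ = -Ψ θ) :
    ∀ θ ∈ Set.Ico a 1, γ₁ θ < γ₂ θ := by
  obtain ⟨ha0, ha1⟩ := ha
  have hδpos : 0 < η * (c₂ - c₁) := mul_pos hη (by linarith)
  have hIcosub : Ico a 1 ⊆ Icc a 1 := Ico_subset_Icc_self
  have key : ∀ θ ∈ Ico a 1, 0 < γ₂ θ - γ₁ θ := by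
    refine aux_pos_of_ode a ha1 (fun θ => γ₂ θ - γ₁ θ)
      (fun θ => Ψ θ / (γ₁ θ * γ₂ θ)) (η * (c₂ - c₁)) hδpos
      (hγ₂cont.sub hγ₁cont) (by simp [hγ₁1, hγ₂1]) ?_ ?_ ?_
    · refine ((hΨcont.mono hIcosub).div
        (((hγ₁cont.mono hIcosub)).mul (hγ₂cont.mono hIcosub)) ?_)
      intro s hs
      exact (mul_pos (hγ₁pos s hs) (hγ₂pos s hs)).ne'
    · intro θ hθ
      exact div_nonneg (hΨnonneg θ (hIcosub hθ))
        (mul_nonneg (hγ₁pos θ hθ).le (hγ₂pos θ hθ).le)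
    · intro θ hθ
      have hθ' : θ ∈ Ico a 1 := ⟨hθ.1.le, hθ.2⟩
      have hmem : Icc a 1 ∈ nhds θ := Icc_mem_nhds hθ.1 hθ.2
      have h1 := (hγ₁deriv θ hθ').hasDerivAt hmem
      have h2 := (hγ₂deriv θ hθ').hasDerivAt hmem
      have hkey : γ₂' θ - γ₁' θ =
          Ψ θ / (γ₁ θ * γ₂ θ) * (γ₂ θ - γ₁ θ) - η * (c₂ - c₁) := by
        have g1 := (hγ₁pos θ hθ').ne'
        have g2 := (hγ₂pos θ hθ').ne'
        have e1 := hode₁ θ hθ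
        have e2 := hode₂ θ hθ
        field_simp
        linear_combination γ₁ θ * e2 - γ₂ θ * e1
      exact hkey ▸ (h2.sub h1)
  intro θ hθ
  have := key θ hθ
  linarith
end

section
/- Strict monotonicity of the jump deficiency in the wave velocity: let η > 0 and c_max < 0, let θ_s : (c_max, 0) → (0,1) be C¹ with θ_s′(c) < 0 for all c, and let Ψ : [0,1] → ℝ be continuous with Ψ ≥ 0 and Ψ(1) = 0. Suppose for each c ∈ (c_max, 0), γ_c : [θ_s(c), 1] → ℝ is continuous with γ_c(1) = 0, positive and C¹ on [θ_s(c), 1), solves γ_c(θ)·γ_c′(θ) + η·c·γ_c(θ) = −Ψ(θ), and that the partial derivative ∂γ_c(θ)/∂c (at fixed θ) exists, is continuous, and is strictly positive for all θ ∈ [θ_s(c), 1). Then the jump deficiency Δγ(c) = γ_c(θ_s(c)) + η·c·θ_s(c) is differentiable with dΔγ/dc = (∂γ_c/∂c)(θ_s(c)) + η·θ_s(c) − (Ψ(θ_s(c))/γ_c(θ_s(c)))·θ_s′(c) > 0; in particular Δγ is strictly increasing on (c_max, 0). -/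
/-!
The derivative is computed from each side separately, always comparing values of the
phase portraits on a common domain. From the left, `θs k > θs c` and one passes through
`γ c (θs k)`: the mean value theorem in the velocity and the joint continuity of `dγ` give the
`dγ` term, the chain rule gives the `γθ · θs'` term. From the right, `θs k < θs c` and one passes
through `γ k (θs c)`; the mean value theorem in `θ` then needs `γ k → γ c (θs c)` near the
surface, which comes from the ODE itself: `γ' ≤ -η k` bounds `γ k` from below and
`(γ²)' ≥ -2Ψ` bounds it from above. The ODE turns `γθ c (θs c)` into `-Ψ/γ - η c`, after which
every term of the derivative has a sign.
-/

open Set Filter Topology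

theorem image_sub_le_mul_sub_of_hasDerivAt_le {f f' : ℝ → ℝ} {a b C : ℝ} (hab : a ≤ b)
    (hf : ContinuousOn f (Icc a b)) (hf' : ∀ x ∈ Ioo a b, HasDerivAt f (f' x) x)
    (hle : ∀ x ∈ Ioo a b, f' x ≤ C) : f b - f a ≤ C * (b - a) := by
  rw [← interior_Icc] at hf' hle
  refine (convex_Icc a b).image_sub_le_mul_sub_of_deriv_le hf
    (fun x hx => (hf' x hx).differentiableAt.differentiableWithinAt)
    (fun x hx => (hf' x hx).deriv ▸ hle x hx) a (left_mem_Icc.2 hab) b (right_mem_Icc.2 hab) hab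

theorem tendsto_of_sub_le_of_sq_le {α : Type*} {l : Filter α} {a e x : α → ℝ} {A L P : ℝ}
    (hA : 0 ≤ A) (ha : Tendsto a l (𝓝 A)) (he : Tendsto e l (𝓝 0))
    (hlow : ∀ᶠ i in l, a i + L * e i ≤ x i) (hup : ∀ᶠ i in l, x i ^ 2 ≤ a i ^ 2 + P * e i) :
    Tendsto x l (𝓝 A) := by
  have hlow' : Tendsto (fun i => a i + L * e i) l (𝓝 A) := by
    simpa using ha.add (he.const_mul L)
  have hup' : Tendsto (fun i => √(a i ^ 2 + P * e i)) l (𝓝 A) := by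
    simpa [Real.sqrt_sq hA] using ((ha.pow 2).add (he.const_mul P)).sqrt
  exact tendsto_of_tendsto_of_tendsto_of_le_of_le' hlow' hup' hlow
    (hup.mono fun i hi => (le_abs_self _).trans (Real.abs_le_sqrt hi))

theorem eq_neg_div_sub_of_mul_add_eq_neg {g g' η k ψ : ℝ} (hg : 0 < g)
    (h : g * g' + η * k * g = -ψ) : g' = -(ψ / g) - η * k := by
  field_simp
  linarith

section PhaseBounds

variable {g g' Ψ : ℝ → ℝ} {η k a b : ℝ}

theorem phase_sub_le (hab : a ≤ b) (hcont : ContinuousOn g (Icc a b))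
    (hderiv : ∀ t ∈ Ioo a b, HasDerivAt g (g' t) t) (hpos : ∀ t ∈ Ioo a b, 0 < g t)
    (hΨ : ∀ t ∈ Ioo a b, 0 ≤ Ψ t) (hode : ∀ t ∈ Ioo a b, g t * g' t + η * k * g t = -Ψ t) :
    g b - g a ≤ -(η * k) * (b - a) :=
  image_sub_le_mul_sub_of_hasDerivAt_le hab hcont hderiv fun t ht => by
    nlinarith [hpos t ht, hΨ t ht, hode t ht]

theorem phase_sq_sub_le {P : ℝ} (hη : 0 ≤ η) (hk : k ≤ 0) (hab : a ≤ b)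
    (hcont : ContinuousOn g (Icc a b)) (hderiv : ∀ t ∈ Ioo a b, HasDerivAt g (g' t) t)
    (hpos : ∀ t ∈ Ioo a b, 0 < g t) (hP : ∀ t ∈ Ioo a b, Ψ t ≤ P)
    (hode : ∀ t ∈ Ioo a b, g t * g' t + η * k * g t = -Ψ t) :
    g a ^ 2 - g b ^ 2 ≤ 2 * P * (b - a) := by
  have h := image_sub_le_mul_sub_of_hasDerivAt_le (f := fun t => -(g t * g t)) (C := 2 * P) hab
    (hcont.mul hcont).neg (fun t ht => ((hderiv t ht).mul (hderiv t ht)).neg) fun t ht => by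
      have hdrift : η * k * g t ≤ 0 :=
        mul_nonpos_of_nonpos_of_nonneg (mul_nonpos_of_nonneg_of_nonpos hη hk) (hpos t ht).le
      linarith [hode t ht, hP t ht]
  nlinarith [h]

end PhaseBounds

section JumpDeficiency

variable {η cmax c : ℝ} {θs θs' Ψ : ℝ → ℝ} {γ γθ dγ : ℝ → ℝ → ℝ}

theorem tendsto_phase_nhdsGT (hη : 0 ≤ η) (hc : c ∈ Ioo cmax 0)
    (hθs : ContinuousAt θs c) (hθsrange : ∀ c ∈ Ioo cmax 0, θs c ∈ Ioo (0:ℝ) 1)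
    (hΨcont : ContinuousOn Ψ (Icc 0 1)) (hΨnonneg : ∀ θ ∈ Icc (0:ℝ) 1, 0 ≤ Ψ θ)
    (hγpos : ∀ c ∈ Ioo cmax 0, ∀ θ ∈ Ico (θs c) 1, 0 < γ c θ)
    (hγderiv : ∀ c ∈ Ioo cmax 0, ∀ θ ∈ Ico (θs c) 1,
      HasDerivWithinAt (γ c) (γθ c θ) (Ici (θs c)) θ)
    (hode : ∀ c ∈ Ioo cmax 0, ∀ θ ∈ Ico (θs c) 1,
      γ c θ * γθ c θ + η * c * γ c θ = -Ψ θ)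
    (hγc : ContinuousAt (fun k => γ k (θs c)) c)
    {ζ : ℝ → ℝ} (hζ : ∀ k ∈ Ioo c 0, ζ k ∈ Icc (θs k) (θs c)) :
    Tendsto (fun k => γ k (ζ k)) (𝓝[>] c) (𝓝 (γ c (θs c))) := by
  obtain ⟨P, hP⟩ := isCompact_Icc.exists_bound_of_continuousOn hΨcont
  have hP0 : 0 ≤ P := (norm_nonneg _).trans (hP 0 ⟨le_rfl, zero_le_one⟩)
  have hθsc : θs c < 1 := (hθsrange c hc).2
  have bounds : ∀ k ∈ Ioo c 0, γ k (θs c) + η * c * (θs c - θs k) ≤ γ k (ζ k) ∧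
      γ k (ζ k) ^ 2 ≤ γ k (θs c) ^ 2 + 2 * P * (θs c - θs k) := by
    intro k hk
    have hk' : k ∈ Ioo cmax 0 := ⟨hc.1.trans hk.1, hk.2⟩
    obtain ⟨hζk, hζc⟩ := hζ k hk
    have hmem : ∀ t ∈ Icc (ζ k) (θs c), t ∈ Ico (θs k) 1 :=
      fun t ht => ⟨hζk.trans ht.1, ht.2.trans_lt hθsc⟩
    have hmem' : ∀ t ∈ Ioo (ζ k) (θs c), t ∈ Ico (θs k) 1 :=
      fun t ht => hmem t (Ioo_subset_Icc_self ht)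
    have hcont : ContinuousOn (γ k) (Icc (ζ k) (θs c)) := fun t ht =>
      (hγderiv k hk' t (hmem t ht)).continuousWithinAt.mono fun s hs => hζk.trans hs.1
    have hderiv : ∀ t ∈ Ioo (ζ k) (θs c), HasDerivAt (γ k) (γθ k t) t := fun t ht =>
      (hγderiv k hk' t (hmem' t ht)).hasDerivAt (Ici_mem_nhds (hζk.trans_lt ht.1))
    have hΨmem : ∀ t ∈ Ioo (ζ k) (θs c), t ∈ Icc (0:ℝ) 1 := fun t ht =>
      ⟨(hθsrange k hk').1.le.trans (hmem' t ht).1, (hmem' t ht).2.le⟩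
    have hpos := fun t ht => hγpos k hk' t (hmem' t ht)
    have hodek := fun t ht => hode k hk' t (hmem' t ht)
    have hlow := phase_sub_le hζc hcont hderiv hpos (fun t ht => hΨnonneg t (hΨmem t ht)) hodek
    have hup := phase_sq_sub_le hη hk'.2.le hζc hcont hderiv hpos
      (fun t ht => (le_abs_self _).trans (hP t (hΨmem t ht))) hodek
    have hdrift : -(η * k) ≤ -(η * c) := neg_le_neg (mul_le_mul_of_nonneg_left hk.1.le hη)
    constructor
    · nlinarith [mul_le_mul hdrift (sub_le_sub_left hζk (θs c)) (sub_nonneg.2 hζc)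
        (neg_nonneg.2 (mul_nonpos_of_nonneg_of_nonpos hη hc.2.le))]
    · nlinarith
  refine tendsto_of_sub_le_of_sq_le (hγpos c hc _ ⟨le_rfl, hθsc⟩).le
    (hγc.tendsto.mono_left nhdsWithin_le_nhds) ?_
    (eventually_of_mem (Ioo_mem_nhdsGT hc.2) fun k hk => (bounds k hk).1)
    (eventually_of_mem (Ioo_mem_nhdsGT hc.2) fun k hk => (bounds k hk).2)
  simpa using (tendsto_const_nhds (x := θs c)).sub (hθs.tendsto.mono_left nhdsWithin_le_nhds)

theorem hasDerivWithinAt_Ici_phase_sub (hη : 0 ≤ η) (hc : c ∈ Ioo cmax 0)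
    (hθs : HasDerivAt θs (θs' c) c) (hanti : StrictAntiOn θs (Ioo cmax 0))
    (hθsrange : ∀ c ∈ Ioo cmax 0, θs c ∈ Ioo (0:ℝ) 1)
    (hΨcont : ContinuousOn Ψ (Icc 0 1)) (hΨnonneg : ∀ θ ∈ Icc (0:ℝ) 1, 0 ≤ Ψ θ)
    (hγpos : ∀ c ∈ Ioo cmax 0, ∀ θ ∈ Ico (θs c) 1, 0 < γ c θ)
    (hγderiv : ∀ c ∈ Ioo cmax 0, ∀ θ ∈ Ico (θs c) 1,
      HasDerivWithinAt (γ c) (γθ c θ) (Ici (θs c)) θ)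
    (hode : ∀ c ∈ Ioo cmax 0, ∀ θ ∈ Ico (θs c) 1,
      γ c θ * γθ c θ + η * c * γ c θ = -Ψ θ)
    (hγc : ContinuousAt (fun k => γ k (θs c)) c) :
    HasDerivWithinAt (fun k => γ k (θs k) - γ k (θs c)) (γθ c (θs c) * θs' c) (Ici c) c := by
  have hθsc : θs c ∈ Ico (θs c) 1 := ⟨le_rfl, (hθsrange c hc).2⟩
  have hmvt : ∀ k ∈ Ioo c 0, ∃ ζ ∈ Ioo (θs k) (θs c),
      γθ k ζ = (γ k (θs c) - γ k (θs k)) / (θs c - θs k) := by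
    intro k hk
    have hk' : k ∈ Ioo cmax 0 := ⟨hc.1.trans hk.1, hk.2⟩
    have hmem : ∀ t ∈ Icc (θs k) (θs c), t ∈ Ico (θs k) 1 :=
      fun t ht => ⟨ht.1, ht.2.trans_lt hθsc.2⟩
    exact exists_hasDerivAt_eq_slope (γ k) (γθ k) (hanti hc hk' hk.1)
      (fun t ht => (hγderiv k hk' t (hmem t ht)).continuousWithinAt.mono fun s hs => hs.1)
      (fun t ht => (hγderiv k hk' t (hmem t (Ioo_subset_Icc_self ht))).hasDerivAt
        (Ici_mem_nhds ht.1))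
  choose! ζ hζ hζslope using hmvt
  have hIoo : Ioo c 0 ∈ 𝓝[>] c := Ioo_mem_nhdsGT hc.2
  have hθs_right : Tendsto θs (𝓝[>] c) (𝓝 (θs c)) :=
    hθs.continuousAt.tendsto.mono_left nhdsWithin_le_nhds
  have hζlim : Tendsto ζ (𝓝[>] c) (𝓝 (θs c)) :=
    tendsto_of_tendsto_of_tendsto_of_le_of_le' hθs_right tendsto_const_nhds
      (eventually_of_mem hIoo fun k hk => (hζ k hk).1.le)
      (eventually_of_mem hIoo fun k hk => (hζ k hk).2.le)
  have hγζ : Tendsto (fun k => γ k (ζ k)) (𝓝[>] c) (𝓝 (γ c (θs c))) :=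
    tendsto_phase_nhdsGT hη hc hθs.continuousAt hθsrange hΨcont hΨnonneg hγpos hγderiv hode hγc
      fun k hk => Ioo_subset_Icc_self (hζ k hk)
  have hΨζ : Tendsto (fun k => Ψ (ζ k)) (𝓝[>] c) (𝓝 (Ψ (θs c))) :=
    ((hΨcont.continuousAt (Icc_mem_nhds (hθsrange c hc).1 hθsc.2)).tendsto).comp hζlim
  have hγθζ : Tendsto (fun k => γθ k (ζ k)) (𝓝[>] c) (𝓝 (γθ c (θs c))) := by
    rw [eq_neg_div_sub_of_mul_add_eq_neg (hγpos c hc _ hθsc) (hode c hc _ hθsc)]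
    refine ((hΨζ.div hγζ (hγpos c hc _ hθsc).ne').neg.sub
      ((tendsto_id.mono_left nhdsWithin_le_nhds).const_mul η)).congr' ?_
    filter_upwards [hIoo] with k hk
    have hk' : k ∈ Ioo cmax 0 := ⟨hc.1.trans hk.1, hk.2⟩
    have hζk : ζ k ∈ Ico (θs k) 1 := ⟨(hζ k hk).1.le, (hζ k hk).2.trans hθsc.2⟩
    exact (eq_neg_div_sub_of_mul_add_eq_neg (hγpos k hk' _ hζk) (hode k hk' _ hζk)).symm
  rw [hasDerivWithinAt_iff_tendsto_slope, Ici_sdiff_left]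
  refine (hγθζ.mul (hθs.tendsto_slope.mono_left (nhdsGT_le_nhdsNE c))).congr' ?_
  filter_upwards [hIoo] with k hk
  have hne : θs c - θs k ≠ 0 := (sub_pos.2 (hanti hc ⟨hc.1.trans hk.1, hk.2⟩ hk.1)).ne'
  rw [hζslope k hk, slope_def_field, slope_def_field]
  field_simp
  ring

theorem hasDerivWithinAt_Iic_phase_sub (hc : c ∈ Ioo cmax 0)
    (hθs : ContinuousAt θs c) (hanti : StrictAntiOn θs (Ioo cmax 0))
    (hθsrange : ∀ c ∈ Ioo cmax 0, θs c ∈ Ioo (0:ℝ) 1)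
    (hdγ : ∀ c ∈ Ioo cmax 0, ∀ θ ∈ Ico (θs c) 1, HasDerivAt (fun k => γ k θ) (dγ c θ) c)
    (hdγcont : ContinuousOn (fun p : ℝ × ℝ => dγ p.1 p.2)
      {p : ℝ × ℝ | p.1 ∈ Ioo cmax 0 ∧ p.2 ∈ Ico (θs p.1) 1}) :
    HasDerivWithinAt (fun k => γ k (θs k) - γ c (θs k)) (dγ c (θs c)) (Iic c) c := by
  set S := {p : ℝ × ℝ | p.1 ∈ Ioo cmax 0 ∧ p.2 ∈ Ico (θs p.1) 1}
  have hsegment : ∀ k ∈ Ioo cmax c, ∀ m ∈ Icc k c, (m, θs k) ∈ S := by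
    intro k hk m hm
    have hk' : k ∈ Ioo cmax 0 := ⟨hk.1, hk.2.trans hc.2⟩
    have hm' : m ∈ Ioo cmax 0 := ⟨hk.1.trans_le hm.1, hm.2.trans_lt hc.2⟩
    exact ⟨hm', hanti.antitoneOn hk' hm' hm.1, (hθsrange k hk').2⟩
  have hmvt : ∀ k ∈ Ioo cmax c, ∃ ξ ∈ Ioo k c,
      dγ ξ (θs k) = (γ c (θs k) - γ k (θs k)) / (c - k) := fun k hk =>
    exists_hasDerivAt_eq_slope (fun m => γ m (θs k)) (fun m => dγ m (θs k)) hk.2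
      (fun m hm => (hdγ m (hsegment k hk m hm).1 _ (hsegment k hk m hm).2).continuousAt
        |>.continuousWithinAt)
      (fun m hm => hdγ m (hsegment k hk m (Ioo_subset_Icc_self hm)).1 _
        (hsegment k hk m (Ioo_subset_Icc_self hm)).2)
  choose! ξ hξ hξslope using hmvt
  have hIoo : Ioo cmax c ∈ 𝓝[<] c := Ioo_mem_nhdsLT hc.1
  have hξlim : Tendsto ξ (𝓝[<] c) (𝓝 c) :=
    tendsto_of_tendsto_of_tendsto_of_le_of_le' nhdsWithin_le_nhds tendsto_const_nhds
      (eventually_of_mem hIoo fun k hk => (hξ k hk).1.le)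
      (eventually_of_mem hIoo fun k hk => (hξ k hk).2.le)
  have hpair : Tendsto (fun k => (ξ k, θs k)) (𝓝[<] c) (𝓝[S] (c, θs c)) :=
    tendsto_nhdsWithin_iff.2 ⟨hξlim.prodMk_nhds (hθs.tendsto.mono_left nhdsWithin_le_nhds),
      eventually_of_mem hIoo fun k hk => hsegment k hk _ (Ioo_subset_Icc_self (hξ k hk))⟩
  have hcS : (c, θs c) ∈ S := ⟨hc, le_rfl, (hθsrange c hc).2⟩
  rw [hasDerivWithinAt_iff_tendsto_slope, Iic_sdiff_right]
  refine ((hdγcont _ hcS).tendsto.comp hpair).congr' ?_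
  filter_upwards [hIoo] with k hk
  have hne : k - c ≠ 0 := (sub_neg.2 hk.2).ne
  simp only [Function.comp_apply, hξslope k hk, slope_def_field, ← neg_sub k c, div_neg]
  field_simp
  ring

theorem hasDerivAt_surface_gradient (hη : 0 ≤ η) (hc : c ∈ Ioo cmax 0)
    (hθs : HasDerivAt θs (θs' c) c) (hanti : StrictAntiOn θs (Ioo cmax 0))
    (hθsrange : ∀ c ∈ Ioo cmax 0, θs c ∈ Ioo (0:ℝ) 1)
    (hΨcont : ContinuousOn Ψ (Icc 0 1)) (hΨnonneg : ∀ θ ∈ Icc (0:ℝ) 1, 0 ≤ Ψ θ)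
    (hγpos : ∀ c ∈ Ioo cmax 0, ∀ θ ∈ Ico (θs c) 1, 0 < γ c θ)
    (hγderiv : ∀ c ∈ Ioo cmax 0, ∀ θ ∈ Ico (θs c) 1,
      HasDerivWithinAt (γ c) (γθ c θ) (Ici (θs c)) θ)
    (hode : ∀ c ∈ Ioo cmax 0, ∀ θ ∈ Ico (θs c) 1,
      γ c θ * γθ c θ + η * c * γ c θ = -Ψ θ)
    (hdγ : ∀ c ∈ Ioo cmax 0, ∀ θ ∈ Ico (θs c) 1, HasDerivAt (fun k => γ k θ) (dγ c θ) c)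
    (hdγcont : ContinuousOn (fun p : ℝ × ℝ => dγ p.1 p.2)
      {p : ℝ × ℝ | p.1 ∈ Ioo cmax 0 ∧ p.2 ∈ Ico (θs p.1) 1}) :
    HasDerivAt (fun k => γ k (θs k)) (dγ c (θs c) + γθ c (θs c) * θs' c) c := by
  have hθsc : θs c ∈ Ico (θs c) 1 := ⟨le_rfl, (hθsrange c hc).2⟩
  have hγc := hdγ c hc _ hθsc
  have hleft : HasDerivWithinAt (fun k => γ c (θs k)) (γθ c (θs c) * θs' c) (Iic c) c := by
    have hmaps : MapsTo θs (Iic c ∩ Ioo cmax 0) (Ici (θs c)) :=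
      fun k hk => hanti.antitoneOn hk.2 hc hk.1
    exact (hasDerivWithinAt_inter (isOpen_Ioo.mem_nhds hc)).1
      ((hγderiv c hc _ hθsc).comp c hθs.hasDerivWithinAt hmaps)
  have hright := hasDerivWithinAt_Ici_phase_sub hη hc hθs hanti hθsrange hΨcont hΨnonneg hγpos
    hγderiv hode hγc.continuousAt
  have hleftG : HasDerivWithinAt (fun k => γ k (θs k)) (dγ c (θs c) + γθ c (θs c) * θs' c)
      (Iic c) c := by
    simpa only [sub_add_cancel] using (hasDerivWithinAt_Iic_phase_sub hc hθs.continuousAt hanti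
      hθsrange hdγ hdγcont).fun_add hleft
  have hrightG : HasDerivWithinAt (fun k => γ k (θs k)) (dγ c (θs c) + γθ c (θs c) * θs' c)
      (Ici c) c := by
    simpa only [sub_add_cancel] using
      (hright.fun_add hγc.hasDerivWithinAt).congr_deriv (add_comm _ _)
  simpa only [Iic_union_Ici, hasDerivWithinAt_univ] using hleftG.union hrightG

end JumpDeficiency

theorem jump_deficiency_strictly_monotone_general
    (η cmax : ℝ) (hη : 0 < η)
    (θs θs' : ℝ → ℝ)
    (hθsderiv : ∀ c ∈ Set.Ioo cmax 0, HasDerivAt θs (θs' c) c)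
    (hθs'neg : ∀ c ∈ Set.Ioo cmax 0, θs' c < 0)
    (hθsrange : ∀ c ∈ Set.Ioo cmax 0, θs c ∈ Set.Ioo (0:ℝ) 1)
    (Ψ : ℝ → ℝ)
    (hΨcont : ContinuousOn Ψ (Set.Icc 0 1))
    (hΨnonneg : ∀ θ ∈ Set.Icc (0:ℝ) 1, 0 ≤ Ψ θ)
    (γ γθ dγ : ℝ → ℝ → ℝ)
    (hγpos : ∀ c ∈ Set.Ioo cmax 0, ∀ θ ∈ Set.Ico (θs c) 1, 0 < γ c θ)
    (hγderiv : ∀ c ∈ Set.Ioo cmax 0, ∀ θ ∈ Set.Ico (θs c) 1,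
      HasDerivWithinAt (γ c) (γθ c θ) (Set.Ici (θs c)) θ)
    (hode : ∀ c ∈ Set.Ioo cmax 0, ∀ θ ∈ Set.Ico (θs c) 1,
      γ c θ * γθ c θ + η * c * γ c θ = -Ψ θ)
    (hdγ : ∀ c ∈ Set.Ioo cmax 0, ∀ θ ∈ Set.Ico (θs c) 1,
      HasDerivAt (fun k => γ k θ) (dγ c θ) c)
    (hdγcont : ContinuousOn (fun p : ℝ × ℝ => dγ p.1 p.2)
      {p : ℝ × ℝ | p.1 ∈ Set.Ioo cmax 0 ∧ p.2 ∈ Set.Ico (θs p.1) 1})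
    (hdγpos : ∀ c ∈ Set.Ioo cmax 0, ∀ θ ∈ Set.Ico (θs c) 1, 0 < dγ c θ) :
    (∀ c ∈ Set.Ioo cmax 0,
      HasDerivAt (fun k => γ k (θs k) + η * k * θs k)
        (dγ c (θs c) + η * θs c - Ψ (θs c) / γ c (θs c) * θs' c) c ∧
      0 < dγ c (θs c) + η * θs c - Ψ (θs c) / γ c (θs c) * θs' c) ∧
    StrictMonoOn (fun c => γ c (θs c) + η * c * θs c) (Set.Ioo cmax 0) := by
  have hanti : StrictAntiOn θs (Ioo cmax 0) :=
    strictAntiOn_of_deriv_neg (convex_Ioo _ _)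
      (fun c hc => (hθsderiv c hc).continuousAt.continuousWithinAt) fun c hc => by
        rw [interior_Ioo] at hc
        exact (hθsderiv c hc).deriv ▸ hθs'neg c hc
  have hderiv : ∀ c ∈ Ioo cmax 0, HasDerivAt (fun k => γ k (θs k) + η * k * θs k)
      (dγ c (θs c) + η * θs c - Ψ (θs c) / γ c (θs c) * θs' c) c := by
    intro c hc
    have hθsc : θs c ∈ Ico (θs c) 1 := ⟨le_rfl, (hθsrange c hc).2⟩
    have hG := hasDerivAt_surface_gradient hη.le hc (hθsderiv c hc) hanti hθsrange hΨcont
      hΨnonneg hγpos hγderiv hode hdγ hdγcont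
    rw [eq_neg_div_sub_of_mul_add_eq_neg (hγpos c hc _ hθsc) (hode c hc _ hθsc)] at hG
    exact (hG.fun_add ((hasDerivAt_id' c).const_mul η |>.fun_mul (hθsderiv c hc))).congr_deriv
      (by ring)
  have hpos : ∀ c ∈ Ioo cmax 0, 0 < dγ c (θs c) + η * θs c - Ψ (θs c) / γ c (θs c) * θs' c := by
    intro c hc
    have hθsc : θs c ∈ Ico (θs c) 1 := ⟨le_rfl, (hθsrange c hc).2⟩
    have hsource : 0 ≤ Ψ (θs c) / γ c (θs c) :=
      div_nonneg (hΨnonneg _ (Ioo_subset_Icc_self (hθsrange c hc))) (hγpos c hc _ hθsc).le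
    nlinarith [hdγpos c hc _ hθsc, mul_pos hη (hθsrange c hc).1, hθs'neg c hc]
  refine ⟨fun c hc => ⟨hderiv c hc, hpos c hc⟩, strictMonoOn_of_deriv_pos (convex_Ioo _ _)
    (fun c hc => (hderiv c hc).continuousAt.continuousWithinAt) fun c hc => ?_⟩
  rw [interior_Ioo] at hc
  exact (hderiv c hc).deriv ▸ hpos c hc

/-- Strict monotonicity of the jump deficiency in the wave velocity: with `η > 0`,
`cmax < 0`, a C¹ strictly decreasing pyrolysis law `θs : (cmax,0) → (0,1)` (with
derivative `θs'` satisfying `θs' < 0`), a continuous nonnegative heat source `Ψ` on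
`[0,1]` with `Ψ(1) = 0`, and for each `c ∈ (cmax,0)` a phase portrait `γ c` on
`[θs(c),1]` (continuous, vanishing at `1`, positive and C¹ on `[θs(c),1)` with
derivative `γθ c`, solving `γ·γ′ + η·c·γ = −Ψ`), such that the partial derivative
`dγ c θ = ∂γ/∂c` at fixed `θ` exists, is (jointly) continuous and strictly positive,
the jump deficiency `Δγ(c) = γ c (θs c) + η·c·θs(c)` is differentiable with positive
derivative `dγ c (θs c) + η·θs(c) − (Ψ(θs c)/γ c (θs c))·θs'(c)`, and in particular
is strictly increasing on `(cmax,0)`. -/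
theorem jump_deficiency_strictly_monotone
    (η cmax : ℝ) (hη : 0 < η) (hcmax : cmax < 0)
    (θs θs' : ℝ → ℝ)
    (hθsderiv : ∀ c ∈ Set.Ioo cmax 0, HasDerivAt θs (θs' c) c)
    (hθs'cont : ContinuousOn θs' (Set.Ioo cmax 0))
    (hθs'neg : ∀ c ∈ Set.Ioo cmax 0, θs' c < 0)
    (hθsrange : ∀ c ∈ Set.Ioo cmax 0, θs c ∈ Set.Ioo (0:ℝ) 1)
    (Ψ : ℝ → ℝ)
    (hΨcont : ContinuousOn Ψ (Set.Icc 0 1))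
    (hΨnonneg : ∀ θ ∈ Set.Icc (0:ℝ) 1, 0 ≤ Ψ θ)
    (hΨ1 : Ψ 1 = 0)
    (γ γθ dγ : ℝ → ℝ → ℝ)
    (hγcont : ∀ c ∈ Set.Ioo cmax 0, ContinuousOn (γ c) (Set.Icc (θs c) 1))
    (hγ1 : ∀ c ∈ Set.Ioo cmax 0, γ c 1 = 0)
    (hγpos : ∀ c ∈ Set.Ioo cmax 0, ∀ θ ∈ Set.Ico (θs c) 1, 0 < γ c θ)
    (hγderiv : ∀ c ∈ Set.Ioo cmax 0, ∀ θ ∈ Set.Ico (θs c) 1,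
      HasDerivWithinAt (γ c) (γθ c θ) (Set.Ici (θs c)) θ)
    (hode : ∀ c ∈ Set.Ioo cmax 0, ∀ θ ∈ Set.Ico (θs c) 1,
      γ c θ * γθ c θ + η * c * γ c θ = -Ψ θ)
    (hdγ : ∀ c ∈ Set.Ioo cmax 0, ∀ θ ∈ Set.Ico (θs c) 1,
      HasDerivAt (fun k => γ k θ) (dγ c θ) c)
    (hdγcont : ContinuousOn (fun p : ℝ × ℝ => dγ p.1 p.2)
      {p : ℝ × ℝ | p.1 ∈ Set.Ioo cmax 0 ∧ p.2 ∈ Set.Ico (θs p.1) 1})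
    (hdγpos : ∀ c ∈ Set.Ioo cmax 0, ∀ θ ∈ Set.Ico (θs c) 1, 0 < dγ c θ) :
    (∀ c ∈ Set.Ioo cmax 0,
      HasDerivAt (fun k => γ k (θs k) + η * k * θs k)
        (dγ c (θs c) + η * θs c - Ψ (θs c) / γ c (θs c) * θs' c) c ∧
      0 < dγ c (θs c) + η * θs c - Ψ (θs c) / γ c (θs c) * θs' c) ∧
    StrictMonoOn (fun c => γ c (θs c) + η * c * θs c) (Set.Ioo cmax 0) :=
  jump_deficiency_strictly_monotone_general η cmax hη θs θs' hθsderiv hθs'neg hθsrange Ψ hΨcont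
    hΨnonneg γ γθ dγ hγpos hγderiv hode hdγ hdγcont hdγpos
end
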